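/- Let x : ℝ → ℝ^L be differentiable with x(t) = g(t)² · v(t) where g : ℝ → ℝ and v : ℝ → ℝ^L satisfy the gradient flow equations g'(t) = 4 g(t) ⟨λ(t), v(t)⟩ and v'(t) = 2 g(t)² λ(t) for a given continuous λ : ℝ → ℝ^L. Then for any t where ‖x(t)‖₂ ≠ 0, d/dt ‖x(t)‖₂ = (2/‖x(t)‖₂) ⟨λ(t), x(t)⟩ · (g(t)⁴ + 4 g(t)² ‖v(t)‖₂²). -/

import Mathlib

/-!
Writing `x = g² • v`, the product rule and the two flow equations give
`x' = 2 g⁴ λ + 8 g² ⟪λ, v⟫ v`, so `⟪x, x'⟫ = 2 ⟪λ, x⟫ (g⁴ + 4 g² ‖v‖²)`;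
away from `x = 0` the norm is differentiable with `‖x‖' = ⟪x, x'⟫ / ‖x‖`.
-/

open RealInnerProductSpace

section

variable {F : Type*} [NormedAddCommGroup F] [InnerProductSpace ℝ F]

theorem HasDerivAt.norm {f : ℝ → F} {f' : F} {t : ℝ} (hf : HasDerivAt f f' t) (h0 : f t ≠ 0) :
    HasDerivAt (fun s => ‖f s‖) (⟪f t, f'⟫ / ‖f t‖) t := by
  have hnorm : ‖f t‖ ≠ 0 := norm_ne_zero_iff.mpr h0
  have hsqrt := hf.norm_sq.sqrt (pow_ne_zero 2 hnorm)
  simp only [Real.sqrt_sq (norm_nonneg _)] at hsqrt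
  convert hsqrt using 1
  field_simp

theorem inner_sq_smul_gradientFlow (g : ℝ) (v l : F) :
    ⟪g ^ 2 • v, g ^ 2 • (2 * g ^ 2) • l + (2 * g * (4 * g * ⟪l, v⟫)) • v⟫
      = 2 * ⟪l, g ^ 2 • v⟫ * (g ^ 4 + 4 * g ^ 2 * ‖v‖ ^ 2) := by
  simp only [inner_add_right, real_inner_smul_left, real_inner_smul_right,
    real_inner_self_eq_norm_sq, real_inner_comm v l]
  ring

end

theorem stmt5_general (L : ℕ) (g : ℝ → ℝ) (v l : ℝ → EuclideanSpace ℝ (Fin L))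
    (hg : ∀ t, HasDerivAt g (4 * g t * (inner ℝ (l t) (v t) : ℝ)) t)
    (hv : ∀ t, HasDerivAt v ((2 * (g t)^2) • l t) t)
    (x : ℝ → EuclideanSpace ℝ (Fin L)) (hx : ∀ t, x t = (g t)^2 • v t) :
    ∀ t : ℝ, ‖x t‖ ≠ 0 →
      deriv (fun s => ‖x s‖) t
        = (2 / ‖x t‖) * (inner ℝ (l t) (x t) : ℝ) * ((g t)^4 + 4 * (g t)^2 * ‖v t‖^2) := by
  intro t ht
  have hx' : HasDerivAt x
      ((g t) ^ 2 • (2 * (g t) ^ 2) • l t + (2 * g t * (4 * g t * ⟪l t, v t⟫)) • v t) t := by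
    rw [funext hx]
    simpa using ((hg t).fun_pow 2).fun_smul (hv t)
  rw [(hx'.norm (norm_ne_zero_iff.mp ht)).deriv, hx t, inner_sq_smul_gradientFlow]
  ring

theorem stmt5 (L : ℕ) (g : ℝ → ℝ) (v l : ℝ → EuclideanSpace ℝ (Fin L))
    (hl : Continuous l)
    (hg : ∀ t, HasDerivAt g (4 * g t * (inner ℝ (l t) (v t) : ℝ)) t)
    (hv : ∀ t, HasDerivAt v ((2 * (g t)^2) • l t) t)
    (x : ℝ → EuclideanSpace ℝ (Fin L)) (hx : ∀ t, x t = (g t)^2 • v t) :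
    ∀ t : ℝ, ‖x t‖ ≠ 0 →
      deriv (fun s => ‖x s‖) t
        = (2 / ‖x t‖) * (inner ℝ (l t) (x t) : ℝ) * ((g t)^4 + 4 * (g t)^2 * ‖v t‖^2) :=
  stmt5_general L g v l hg hv x hx
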